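/- Let Y be a random vector in ℝⁿ supported in B(c_Y, r_Y) with density ≤ A_Y / V_n(B(c_Y, r_Y)), let u ∈ ℝⁿ be a unit vector, and let t ∈ ℝ satisfy ⟨u, c_Y⟩ − t ≥ d for some d ∈ (0, r_Y). Then P(⟨u, Y⟩ ≤ t) ≤ A_Y (1 − d²/r_Y²)^{n/2}. -/

import Mathlib

/-!
On the half-space `⟪u, y⟫ ≤ t`, at distance at least `d` from `c_Y`, the ball `B(c_Y, r_Y)` is
contained in the ball of radius `√(r_Y² - d²)` around `c_Y - d • u`: expanding
`‖y - c_Y + d • u‖²` and using `⟪u, y - c_Y⟫ ≤ -d` gives at most `r_Y² - d²`. The density bound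
turns the probability into `A_Y` times the ratio of the volumes of the two balls, which is
`(√(r_Y² - d²) / r_Y)ⁿ`.
-/

open MeasureTheory Metric
open scoped RealInnerProductSpace ENNReal

theorem setOf_inner_le_inter_closedBall_subset_closedBall {E : Type*}
    [NormedAddCommGroup E] [InnerProductSpace ℝ E] {u c : E} {r t d : ℝ} (hu : ‖u‖ = 1)
    (hd : 0 ≤ d) (hsep : d ≤ ⟪u, c⟫ - t) :
    {y | ⟪u, y⟫ ≤ t} ∩ closedBall c r ⊆ closedBall (c - d • u) √(r ^ 2 - d ^ 2) := by
  rintro y ⟨hy : ⟪u, y⟫ ≤ t, hyB⟩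
  rw [mem_closedBall, dist_eq_norm] at hyB ⊢
  have hinner : ⟪y - c, d • u⟫ ≤ -d ^ 2 := by
    rw [real_inner_smul_right, real_inner_comm, inner_sub_right]
    nlinarith
  have hdu : ‖d • u‖ ^ 2 = d ^ 2 := by rw [norm_smul, hu, mul_one, Real.norm_eq_abs, sq_abs]
  have hsq : ‖y - (c - d • u)‖ ^ 2 ≤ r ^ 2 - d ^ 2 := by
    rw [sub_sub_eq_add_sub, add_sub_right_comm, norm_add_sq_real, hdu]
    nlinarith [norm_nonneg (y - c)]
  simpa only [Real.sqrt_sq (norm_nonneg _)] using Real.sqrt_le_sqrt hsq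

theorem withDensity_apply_le_mul_measure_inter {α : Type*} [MeasurableSpace α] {μ : Measure α}
    {f : α → ℝ≥0∞} {B : Set α} {M : ℝ≥0∞} (hB : MeasurableSet B) (hf_supp : ∀ x, x ∉ B → f x = 0)
    (hf_le : ∀ x, f x ≤ M) (s : Set α) :
    μ.withDensity f s ≤ M * μ (s ∩ B) := by
  have hf : f ≤ B.indicator fun _ ↦ M := fun x ↦ by
    by_cases hx : x ∈ B
    · simpa [hx] using hf_le x
    · simp [hx, hf_supp x hx]
  calc μ.withDensity f s ≤ μ.withDensity (B.indicator fun _ ↦ M) s :=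
        withDensity_mono (Filter.Eventually.of_forall hf) s
    _ = M * μ (s ∩ B) := by
        rw [withDensity_indicator hB, withDensity_const, Measure.smul_apply,
          Measure.restrict_apply' hB, smul_eq_mul]

theorem Measure.addHaar_closedBall_div_addHaar_closedBall {E : Type*} [NormedAddCommGroup E]
    [NormedSpace ℝ E] [MeasurableSpace E] [BorelSpace E] [FiniteDimensional ℝ E]
    (μ : Measure E) [μ.IsAddHaarMeasure] (x y : E) {s r : ℝ} (hs : 0 ≤ s) (hr : 0 < r) :
    μ (closedBall x s) / μ (closedBall y r) = ENNReal.ofReal ((s / r) ^ Module.finrank ℝ E) := by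
  rw [Measure.addHaar_closedBall μ x hs, Measure.addHaar_closedBall μ y hr.le,
    ENNReal.mul_div_mul_right _ _ (measure_ball_pos μ 0 one_pos).ne' measure_ball_lt_top.ne,
    ← ENNReal.ofReal_div_of_pos (by positivity), div_pow]

theorem Real.sqrt_sq_sub_sq_div {r d : ℝ} (hr : 0 < r) :
    √(r ^ 2 - d ^ 2) / r = √(1 - d ^ 2 / r ^ 2) := by
  have hfactor : r ^ 2 - d ^ 2 = (1 - d ^ 2 / r ^ 2) * r ^ 2 := by field_simp
  rw [hfactor, Real.sqrt_mul' _ (sq_nonneg r), Real.sqrt_sq hr.le, mul_div_cancel_right₀ _ hr.ne']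

theorem new_class_detection_bound_general (n : ℕ) (cY : EuclideanSpace ℝ (Fin n))
    (rY AY : ℝ)
    (p : EuclideanSpace ℝ (Fin n) → ℝ≥0∞)
    (μ : Measure (EuclideanSpace ℝ (Fin n)))
    (hμ : μ = volume.withDensity p)
    (hsupp : ∀ x, x ∉ Metric.closedBall cY rY → p x = 0)
    (hbound : ∀ x, p x ≤ ENNReal.ofReal AY / volume (Metric.closedBall cY rY))
    (u : EuclideanSpace ℝ (Fin n)) (hu : ‖u‖ = 1)
    (t d : ℝ) (hd : d ∈ Set.Ioo 0 rY) (hsep : ⟪u, cY⟫ - t ≥ d) :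
    μ {y | ⟪u, y⟫ ≤ t}
      ≤ ENNReal.ofReal (AY * Real.sqrt (1 - d ^ 2 / rY ^ 2) ^ n) := by
  obtain ⟨hd0, hdr⟩ := hd
  have hr : 0 < rY := hd0.trans hdr
  subst hμ
  calc volume.withDensity p {y | ⟪u, y⟫ ≤ t}
      ≤ ENNReal.ofReal AY / volume (closedBall cY rY) *
          volume ({y | ⟪u, y⟫ ≤ t} ∩ closedBall cY rY) :=
        withDensity_apply_le_mul_measure_inter isClosed_closedBall.measurableSet hsupp hbound _
    _ ≤ ENNReal.ofReal AY / volume (closedBall cY rY) *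
          volume (closedBall (cY - d • u) √(rY ^ 2 - d ^ 2)) := by
        gcongr
        exact setOf_inner_le_inter_closedBall_subset_closedBall hu hd0.le hsep
    _ = ENNReal.ofReal (AY * Real.sqrt (1 - d ^ 2 / rY ^ 2) ^ n) := by
        rw [ENNReal.mul_comm_div, Measure.addHaar_closedBall_div_addHaar_closedBall _ _ _
          (Real.sqrt_nonneg _) hr, finrank_euclideanSpace_fin, Real.sqrt_sq_sub_sq_div hr,
          ENNReal.ofReal_mul' (by positivity)]

theorem new_class_detection_bound (n : ℕ) (cY : EuclideanSpace ℝ (Fin n))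
    (rY AY : ℝ) (hr : 0 < rY) (hA : 0 < AY)
    (p : EuclideanSpace ℝ (Fin n) → ℝ≥0∞)
    (μ : Measure (EuclideanSpace ℝ (Fin n)))
    (hμ : μ = volume.withDensity p) [IsProbabilityMeasure μ]
    (hsupp : ∀ x, x ∉ Metric.closedBall cY rY → p x = 0)
    (hbound : ∀ x, p x ≤ ENNReal.ofReal AY / volume (Metric.closedBall cY rY))
    (u : EuclideanSpace ℝ (Fin n)) (hu : ‖u‖ = 1)
    (t d : ℝ) (hd : d ∈ Set.Ioo 0 rY) (hsep : ⟪u, cY⟫ - t ≥ d) :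
    μ {y | ⟪u, y⟫ ≤ t}
      ≤ ENNReal.ofReal (AY * Real.sqrt (1 - d ^ 2 / rY ^ 2) ^ n) :=
  new_class_detection_bound_general n cY rY AY p μ hμ hsupp hbound u hu t d hd hsep
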